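/- Let G be a group acting by homeomorphisms on a compact Hausdorff space X. For every regular Borel probability measure ν on X, the Poisson map P_ν : C(X,ℝ) → ℓ∞(G) is a unital positive G-equivariant linear map; conversely, for every unital positive G-equivariant linear map ψ : C(X,ℝ) → ℓ∞(G) there exists a unique regular Borel probability measure ν on X such that ψ = P_ν, namely the measure representing the positive functional f ↦ ψ(f)(e). In particular, ν ↦ P_ν is a bijection from the regular Borel probability measures on X onto the unital positive G-equivariant linear maps C(X,ℝ) → ℓ∞(G). -/

import Mathlib

/-!
Evaluating `ψ` at the identity gives a state `f ↦ ψ f e` of `C(X, ℝ)`, which by the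
Riesz–Markov–Kakutani theorem is integration against a unique regular probability measure `ν`.
Equivariance then gives `ψ f s = ψ (f ∘ (s • ·)) e = ∫ f (s • x) dν(x)`, so `ψ = P_ν`; and any
`ν'` with `ψ = P_ν'` integrates every `f` like `ν` (take `s = e`), hence equals `ν` by regularity.
-/

open MeasureTheory
open scoped CompactlySupported BoundedContinuousFunction

namespace MeasureTheory

variable {X : Type*} [TopologicalSpace X] [CompactSpace X] [T2Space X]
  [MeasurableSpace X] [BorelSpace X]

theorem Measure.ext_of_integral_continuousMap_eq {μ ν : Measure X} [μ.Regular] [ν.Regular]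
    (h : ∀ f : C(X, ℝ), ∫ x, f x ∂μ = ∫ x, f x ∂ν) : μ = ν :=
  Measure.ext_of_integral_eq_on_compactlySupported fun f ↦ h f

theorem exists_regular_probabilityMeasure_integral_eq (Λ : C(X, ℝ) →ₗ[ℝ] ℝ)
    (hpos : ∀ f : C(X, ℝ), (∀ x, 0 ≤ f x) → 0 ≤ Λ f) (hone : Λ 1 = 1) :
    ∃ μ : ProbabilityMeasure X, (μ : Measure X).Regular ∧
      ∀ f : C(X, ℝ), ∫ x, f x ∂(μ : Measure X) = Λ f := by
  let Λc : C_c(X, ℝ) →ₚ[ℝ] ℝ := PositiveLinearMap.mk₀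
    { toFun f := Λ f
      map_add' f g := Λ.map_add f g
      map_smul' c f := Λ.map_smul c f }
    (fun f hf ↦ hpos f hf)
  have hint (f : C(X, ℝ)) : ∫ x, f x ∂(RealRMK.rieszMeasure Λc) = Λ f :=
    RealRMK.integral_rieszMeasure Λc (CompactlySupportedContinuousMap.continuousMapEquiv f)
  have hprob : IsProbabilityMeasure (RealRMK.rieszMeasure Λc) := by
    rw [isProbabilityMeasure_iff_real]
    simpa [hone] using hint 1
  exact ⟨⟨_, hprob⟩, RealRMK.regular_rieszMeasure Λc, hint⟩

end MeasureTheory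

section Poisson

variable {G X : Type*} [Group G] [TopologicalSpace X] [MulAction G X] [ContinuousConstSMul G X]

theorem apply_eq_apply_one_comp_smul (ψ : C(X, ℝ) → G → ℝ)
    (hequiv : ∀ (s : G) (f : C(X, ℝ)) (t : G),
      ψ (f.comp ⟨fun x ↦ s⁻¹ • x, continuous_const_smul s⁻¹⟩) t = ψ f (s⁻¹ * t))
    (f : C(X, ℝ)) (s : G) :
    ψ f s = ψ (f.comp ⟨fun x ↦ s • x, continuous_const_smul s⟩) 1 := by
  simpa using (hequiv s⁻¹ f 1).symm

variable [CompactSpace X] [MeasurableSpace X] [OpensMeasurableSpace X]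

theorem integrable_comp_smul (ν : Measure X) [IsFiniteMeasure ν] (f : C(X, ℝ)) (s : G) :
    Integrable (fun x ↦ f (s • x)) ν :=
  (f.continuous.comp (continuous_const_smul s)).integrable_of_hasCompactSupport
    (.of_compactSpace _)

variable [TopologicalSpace G] [DiscreteTopology G]

noncomputable def poissonMap (ν : Measure X) [IsFiniteMeasure ν] :
    C(X, ℝ) →ₗ[ℝ] G →ᵇ ℝ where
  toFun f := .ofNormedAddCommGroupDiscrete (fun s ↦ ∫ x, f (s • x) ∂ν) (‖f‖ * ν.real .univ)
    fun _ ↦ norm_integral_le_of_norm_le_const (.of_forall fun _ ↦ f.norm_coe_le_norm _)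
  map_add' f g := by
    ext s
    exact integral_add (integrable_comp_smul ν f s) (integrable_comp_smul ν g s)
  map_smul' c f := by
    ext s
    exact integral_const_mul c _

@[simp]
theorem poissonMap_apply (ν : Measure X) [IsFiniteMeasure ν] (f : C(X, ℝ)) (s : G) :
    poissonMap ν f s = ∫ x, f (s • x) ∂ν :=
  rfl

theorem poissonMap_one (ν : Measure X) [IsProbabilityMeasure ν] (s : G) :
    poissonMap ν 1 s = 1 := by
  simp

theorem poissonMap_nonneg (ν : Measure X) [IsFiniteMeasure ν] {f : C(X, ℝ)}
    (hf : ∀ x, 0 ≤ f x) (s : G) : 0 ≤ poissonMap ν f s :=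
  integral_nonneg fun _ ↦ hf _

theorem poissonMap_comp_smul_inv (ν : Measure X) [IsFiniteMeasure ν] (s : G) (f : C(X, ℝ))
    (t : G) :
    poissonMap ν (f.comp ⟨fun x ↦ s⁻¹ • x, continuous_const_smul s⁻¹⟩) t =
      poissonMap ν f (s⁻¹ * t) := by
  simp [mul_smul]

end Poisson

/-- The correspondence `ν ↦ P_ν` is a bijection between regular Borel probability measures
on `X` and unital positive `G`-equivariant linear maps `C(X,ℝ) → ℓ∞(G)`: every `P_ν` is such
a map, and every such map `ψ` equals `P_ν` for a unique regular Borel probability measure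
`ν`. -/
theorem stmt_4 {G X : Type*} [Group G] [TopologicalSpace G] [DiscreteTopology G]
    [TopologicalSpace X] [CompactSpace X] [T2Space X]
    [MeasurableSpace X] [BorelSpace X]
    [MulAction G X] [ContinuousConstSMul G X] :
    (∀ ν : ProbabilityMeasure X, (ν : Measure X).Regular →
      ∃ ψ : C(X, ℝ) →ₗ[ℝ] BoundedContinuousFunction G ℝ,
        (∀ (f : C(X, ℝ)) (s : G), ψ f s = ∫ x, f (s • x) ∂(ν : Measure X)) ∧
        (∀ s : G, ψ 1 s = 1) ∧
        (∀ f : C(X, ℝ), (∀ x, 0 ≤ f x) → ∀ s : G, 0 ≤ ψ f s) ∧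
        (∀ (s : G) (f : C(X, ℝ)) (t : G),
          ψ (f.comp ⟨fun x => s⁻¹ • x, continuous_const_smul s⁻¹⟩) t = ψ f (s⁻¹ * t)))
    ∧
    (∀ ψ : C(X, ℝ) →ₗ[ℝ] BoundedContinuousFunction G ℝ,
      (∀ s : G, ψ 1 s = 1) →
      (∀ f : C(X, ℝ), (∀ x, 0 ≤ f x) → ∀ s : G, 0 ≤ ψ f s) →
      (∀ (s : G) (f : C(X, ℝ)) (t : G),
          ψ (f.comp ⟨fun x => s⁻¹ • x, continuous_const_smul s⁻¹⟩) t = ψ f (s⁻¹ * t)) →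
      ∃! ν : ProbabilityMeasure X, (ν : Measure X).Regular ∧
        ∀ (f : C(X, ℝ)) (s : G), ψ f s = ∫ x, f (s • x) ∂(ν : Measure X)) := by
  refine ⟨fun ν _ ↦ ⟨poissonMap (ν : Measure X), poissonMap_apply _, poissonMap_one _,
    fun _ ↦ poissonMap_nonneg _, poissonMap_comp_smul_inv _⟩, fun ψ hone hpos hequiv ↦ ?_⟩
  obtain ⟨μ, hμ, hμψ⟩ := exists_regular_probabilityMeasure_integral_eq
    ((BoundedContinuousFunction.evalCLM ℝ (1 : G)).toLinearMap ∘ₗ ψ)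
    (fun f hf ↦ hpos f hf 1) (hone 1)
  have hrep (f : C(X, ℝ)) (s : G) : ψ f s = ∫ x, f (s • x) ∂(μ : Measure X) :=
    (apply_eq_apply_one_comp_smul (fun f ↦ ψ f) hequiv f s).trans (hμψ _).symm
  refine ⟨μ, ⟨hμ, hrep⟩, ?_⟩
  rintro ν ⟨hν, hνψ⟩
  refine ProbabilityMeasure.toMeasure_injective <|
    Measure.ext_of_integral_continuousMap_eq fun f ↦ ?_
  simpa using (hνψ f 1).symm.trans (hrep f 1)
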